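/- If ζ ⊑ χ (ζ is comprehended in χ) for isometries ζ : H → H_L^ζ ⊗ H_R^ζ and χ : H → H_L^χ ⊗ H_R^χ, then every ζ-local operator is χ-local: if A = ζ†(Ã ⊗ 1)ζ for some Ã ∈ L(H_L^ζ), then A = χ†(à ⊗ 1)χ for some à ∈ L(H_L^χ). -/
import Mathlib


open Matrix Kronecker

/-- A witness that the isometry `ζ` is comprehended in the isometry `χ`. -/
structure CompWitness {n lz rz lx rx : Type} [Fintype n] [DecidableEq n]
    [Fintype lz] [DecidableEq lz] [Fintype rz] [DecidableEq rz]
    [Fintype lx] [DecidableEq lx] [Fintype rx] [DecidableEq rx]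
    (ζ : Matrix (lz × rz) n ℂ) (χ : Matrix (lx × rx) n ℂ) : Type 1 where
  m : Type
  [fm : Fintype m]
  [dm : DecidableEq m]
  b : Matrix (m × rx) rz ℂ
  w : Matrix (lz × m) lx ℂ
  hb : bᴴ * b = 1
  hw : wᴴ * w = 1
  heq : ((1 : Matrix lz lz ℂ) ⊗ₖ b) * ζ =
    ((w ⊗ₖ (1 : Matrix rx rx ℂ)) * χ).submatrix (Equiv.prodAssoc lz m rx).symm id

lemma kronecker_conjT {l m p q : Type} (A : Matrix l m ℂ) (B : Matrix p q ℂ) :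
    (A ⊗ₖ B)ᴴ = Aᴴ ⊗ₖ Bᴴ := by
  ext ⟨i, j⟩ ⟨k, l⟩
  simp [Matrix.conjTranspose_apply, mul_comm]

/-- If `ζ ⊑ χ`, then every `ζ`-local operator is `χ`-local. -/
theorem comprehension_implies_local_inclusion {n lz rz lx rx : Type}
    [Fintype n] [DecidableEq n]
    [Fintype lz] [DecidableEq lz] [Fintype rz] [DecidableEq rz]
    [Fintype lx] [DecidableEq lx] [Fintype rx] [DecidableEq rx]
    (ζ : Matrix (lz × rz) n ℂ) (χ : Matrix (lx × rx) n ℂ)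
    (hζ : ζᴴ * ζ = 1) (hχ : χᴴ * χ = 1)
    (hcomp : Nonempty (CompWitness ζ χ))
    (A : Matrix n n ℂ)
    (hA : ∃ At : Matrix lz lz ℂ, A = ζᴴ * (At ⊗ₖ (1 : Matrix rz rz ℂ)) * ζ) :
    ∃ Ah : Matrix lx lx ℂ, A = χᴴ * (Ah ⊗ₖ (1 : Matrix rx rx ℂ)) * χ := by
  obtain ⟨W⟩ := hcomp
  obtain ⟨At, rfl⟩ := hA
  letI : Fintype W.m := W.fm
  letI : DecidableEq W.m := W.dm
  refine ⟨W.wᴴ * (At ⊗ₖ (1 : Matrix W.m W.m ℂ)) * W.w, ?_⟩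
  set e := (Equiv.prodAssoc lz W.m rx).symm
  have key : (At ⊗ₖ (1 : Matrix rz rz ℂ)) =
      ((1 : Matrix lz lz ℂ) ⊗ₖ W.b)ᴴ *
        (At ⊗ₖ ((1 : Matrix W.m W.m ℂ) ⊗ₖ (1 : Matrix rx rx ℂ))) *
        ((1 : Matrix lz lz ℂ) ⊗ₖ W.b) := by
    rw [kronecker_conjT, conjTranspose_one, ← mul_kronecker_mul, ← mul_kronecker_mul,
      one_mul, mul_one, one_kronecker_one, Matrix.mul_one, W.hb]
  have hD : At ⊗ₖ ((1 : Matrix W.m W.m ℂ) ⊗ₖ (1 : Matrix rx rx ℂ)) =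
      ((At ⊗ₖ (1 : Matrix W.m W.m ℂ)) ⊗ₖ (1 : Matrix rx rx ℂ)).submatrix e e :=
    (kronecker_assoc' At 1 1).symm
  calc ζᴴ * (At ⊗ₖ (1 : Matrix rz rz ℂ)) * ζ
      = (((1 : Matrix lz lz ℂ) ⊗ₖ W.b) * ζ)ᴴ *
          (At ⊗ₖ ((1 : Matrix W.m W.m ℂ) ⊗ₖ (1 : Matrix rx rx ℂ))) *
          (((1 : Matrix lz lz ℂ) ⊗ₖ W.b) * ζ) := by
        rw [key]; simp only [conjTranspose_mul, Matrix.mul_assoc]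
    _ = (((W.w ⊗ₖ (1 : Matrix rx rx ℂ)) * χ).submatrix e id)ᴴ *
          (((At ⊗ₖ (1 : Matrix W.m W.m ℂ)) ⊗ₖ (1 : Matrix rx rx ℂ)).submatrix e e) *
          (((W.w ⊗ₖ (1 : Matrix rx rx ℂ)) * χ).submatrix e id) := by
        rw [W.heq, hD]
    _ = ((W.w ⊗ₖ (1 : Matrix rx rx ℂ)) * χ)ᴴ *
          ((At ⊗ₖ (1 : Matrix W.m W.m ℂ)) ⊗ₖ (1 : Matrix rx rx ℂ)) *
          ((W.w ⊗ₖ (1 : Matrix rx rx ℂ)) * χ) := by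
        rw [conjTranspose_submatrix]
        rw [show (((W.w ⊗ₖ (1 : Matrix rx rx ℂ)) * χ)ᴴ).submatrix (id : n → n) e =
          (((W.w ⊗ₖ (1 : Matrix rx rx ℂ)) * χ)ᴴ).submatrix (Equiv.refl n) e from rfl,
          show (((W.w ⊗ₖ (1 : Matrix rx rx ℂ)) * χ)).submatrix e (id : n → n) =
          (((W.w ⊗ₖ (1 : Matrix rx rx ℂ)) * χ)).submatrix e (Equiv.refl n) from rfl,
          submatrix_mul_equiv, submatrix_mul_equiv]
        simp
    _ = χᴴ * ((W.wᴴ * (At ⊗ₖ (1 : Matrix W.m W.m ℂ)) * W.w) ⊗ₖ (1 : Matrix rx rx ℂ)) * χ := by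
        have h2 : (W.wᴴ * (At ⊗ₖ (1 : Matrix W.m W.m ℂ)) * W.w) ⊗ₖ (1 : Matrix rx rx ℂ) =
            (W.wᴴ ⊗ₖ (1 : Matrix rx rx ℂ)) *
              ((At ⊗ₖ (1 : Matrix W.m W.m ℂ)) ⊗ₖ (1 : Matrix rx rx ℂ)) *
              (W.w ⊗ₖ (1 : Matrix rx rx ℂ)) := by
          rw [← mul_kronecker_mul, ← mul_kronecker_mul, Matrix.one_mul, Matrix.one_mul]
        rw [conjTranspose_mul, kronecker_conjT, conjTranspose_one, h2]
        simp only [Matrix.mul_assoc]
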